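/- In the formal sl2-setup, the element F^{3i}(x_{3,1}^{2i}) ∈ A_{(0,2i)}, when written as a polynomial in the variables x_{0,2j} and y, has the coefficient of x_{0,2i} equal to a strictly negative rational number. (This is the key nondegeneracy in the proof that the tautological ring of M_{g,1} is generated by κ₁,...,κ_{⌊g/3⌋} and ψ.) -/

import Mathlib

open MvPolynomial Finset

/-- The index set of the tautological variables `x_{i,j}`: pairs `(i,j)` with
`0 ≤ i ≤ j + 2`, `0 ≤ j ≤ 2g-2`, `i + j` even, and `(i,j) ≠ (0,0)`. -/
abbrev Vars (g : ℕ) :=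
  {p : Fin (2 * g + 1) × Fin (2 * g + 1) //
    (p.1 : ℕ) ≤ (p.2 : ℕ) + 2 ∧ (p.2 : ℕ) ≤ 2 * g - 2 ∧
      ((p.1 : ℕ) + (p.2 : ℕ)) % 2 = 0 ∧ ¬((p.1 : ℕ) = 0 ∧ (p.2 : ℕ) = 0)}

/-- Variables of the ring `A`: the `x_{i,j}` together with `y`. -/
abbrev Idx (g : ℕ) := Vars g ⊕ Unit

/-- The bigraded polynomial ring `A = ℚ[{x_{i,j}}, y]` (with `x_{0,0} = g` and `x_{i,j} = 0`
for out-of-range indices, implemented via the total function `xv`). -/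
abbrev A (g : ℕ) := MvPolynomial (Idx g) ℚ

/-- The class `y` (i.e. `ψ`), of bidegree `(0,2)`. -/
noncomputable def Y (g : ℕ) : A g := X (Sum.inr ())

/-- The element `x_{i,j}` of `A`, for arbitrary integers `i, j`: the corresponding variable
when the indices are in range, `g` when `(i,j) = (0,0)`, and `0` otherwise. -/
noncomputable def xv (g : ℕ) (i j : ℤ) : A g :=
  if h : 0 ≤ i ∧ 0 ≤ j ∧ i ≤ j + 2 ∧ j ≤ 2 * (g : ℤ) - 2 ∧ (i + j) % 2 = 0 ∧
      ¬(i = 0 ∧ j = 0) then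
    X (Sum.inl ⟨(⟨i.toNat, by omega⟩, ⟨j.toNat, by omega⟩),
      show i.toNat ≤ j.toNat + 2 by omega,
      show j.toNat ≤ 2 * g - 2 by omega,
      show (i.toNat + j.toNat) % 2 = 0 by omega,
      show ¬(i.toNat = 0 ∧ j.toNat = 0) by omega⟩)
  else if i = 0 ∧ j = 0 then (g : A g) else 0

/-- First index of a variable. -/
def vi {g : ℕ} (v : Vars g) : ℤ := (v.1.1 : ℕ)

/-- Second index of a variable. -/
def vj {g : ℕ} (v : Vars g) : ℤ := (v.1.2 : ℕ)

/-- Binomial coefficient `C(n, k)` for integers, zero when `k < 0`. -/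
noncomputable def binom (n k : ℤ) : ℚ :=
  if 0 ≤ k then (∏ s ∈ Finset.range k.toNat, ((n : ℚ) - s)) / k.toNat.factorial else 0

/-- The operator `E`: multiplication by `x_{2,0}`. -/
noncomputable def Eop (g : ℕ) : Module.End ℚ (A g) := LinearMap.mulLeft ℚ (xv g 2 0)

/-- The differential operator
`F = (1/2) Σ (y x_{i-1,j-1} x_{k-1,l-1} - C(i+k-2, i-1) x_{i+k-2,j+l}) ∂x_{i,j} ∂x_{k,l}
      + Σ x_{i-2,j} ∂x_{i,j}`. -/
noncomputable def Fop (g : ℕ) : Module.End ℚ (A g) :=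
  (1 / 2 : ℚ) • (∑ v : Vars g, ∑ w : Vars g,
      LinearMap.mulLeft ℚ
          (Y g * xv g (vi v - 1) (vj v - 1) * xv g (vi w - 1) (vj w - 1) -
            C (binom (vi v + vi w - 2) (vi v - 1)) * xv g (vi v + vi w - 2) (vj v + vj w)) ∘ₗ
        (pderiv (Sum.inl v)).toLinearMap ∘ₗ (pderiv (Sum.inl w)).toLinearMap) +
    ∑ v : Vars g,
      LinearMap.mulLeft ℚ (xv g (vi v - 2) (vj v)) ∘ₗ (pderiv (Sum.inl v)).toLinearMap

/-- The bigrading: `x_{i,j}` has weight `(i,j)` and `y` has weight `(0,2)`. -/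
def wt (g : ℕ) : Idx g → ℤ × ℤ := Sum.elim (fun v => (vi v, vj v)) (fun _ => (0, 2))

/-!
On `y`-free monomials `F` acts only through the merging terms
`-C(i+k-2, i-1) x_{i+k-2,j+l} ∂_{i,j} ∂_{k,l}`, which lower the degree by one and have a
non-positive coefficient, and the shifting terms `x_{i-2,j} ∂_{i,j}`, which keep the degree and
have a positive one. So every `y`-free coefficient of `F^t(x_{3,1}^{2i})` has the sign
`(-1)^deg`. The one exception, `x_{0,0} ∂_{2,0} = g ∂_{2,0}`, never contributes, since no `y`-free
monomial with nonzero coefficient contains `x_{2,0}`. As all contributions to the coefficient of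
`x_{0,2i}` then have the same sign, it is nonzero once a single path reaches it: merging a copy of
`x_{3,1}` in `2i - 1` times gives `x_{2i+2,2i}`, and shifting `i + 1` times gives `x_{0,2i}`.
-/

namespace MvPolynomial

variable {σ R : Type*} [CommRing R]

noncomputable def signedCoeff (m : σ →₀ ℕ) : MvPolynomial σ R →ₗ[R] R :=
  (-1) ^ m.degree • lcoeff R m

theorem signedCoeff_apply (m : σ →₀ ℕ) (p : MvPolynomial σ R) :
    signedCoeff m p = (-1) ^ m.degree * coeff m p := by
  simp [signedCoeff]

theorem signedCoeff_X_mul (m : σ →₀ ℕ) (s : σ) (p : MvPolynomial σ R) :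
    signedCoeff (m + Finsupp.single s 1) (X s * p) = -signedCoeff m p := by
  rw [signedCoeff_apply, signedCoeff_apply, add_comm, coeff_X_mul, map_add,
    Finsupp.degree_single, pow_add]
  ring

theorem signedCoeff_pderiv (m : σ →₀ ℕ) (i : σ) (p : MvPolynomial σ R) :
    signedCoeff m (pderiv i p) = -(signedCoeff (m + Finsupp.single i 1) p * (m i + 1)) := by
  rw [signedCoeff_apply, signedCoeff_apply, coeff_pderiv, map_add, Finsupp.degree_single,
    pow_succ]
  ring

end MvPolynomial

theorem binom_nonneg {n k : ℤ} (h : k ≤ n + 1) : 0 ≤ binom n k := by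
  unfold binom
  split_ifs with hk
  · refine div_nonneg (prod_nonneg fun s hs => ?_) (by positivity)
    have : (s : ℤ) ≤ n := by rw [mem_range] at hs; omega
    exact sub_nonneg.2 (by exact_mod_cast this)
  · exact le_rfl

theorem binom_pos {n k : ℤ} (hk : 0 ≤ k) (h : k ≤ n) : 0 < binom n k := by
  unfold binom
  rw [if_pos hk]
  refine div_pos (prod_pos fun s hs => ?_) (by positivity)
  have : (s : ℤ) < n := by rw [mem_range] at hs; omega
  exact sub_pos.2 (by exact_mod_cast this)

section

variable {g : ℕ}

def IsVarIndex (g : ℕ) (a b : ℤ) : Prop :=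
  0 ≤ a ∧ 0 ≤ b ∧ a ≤ b + 2 ∧ b ≤ 2 * (g : ℤ) - 2 ∧ (a + b) % 2 = 0 ∧ ¬(a = 0 ∧ b = 0)

theorem isVarIndex_vi_vj (u : Vars g) : IsVarIndex g (vi u) (vj u) := by
  obtain ⟨⟨a, b⟩, h1, h2, h3, h4⟩ := u
  dsimp only at h1 h2 h3 h4
  have := a.isLt
  have := b.isLt
  simp only [IsVarIndex, vi, vj]
  omega

theorem exists_vi_vj_eq {a b : ℤ} (h : IsVarIndex g a b) : ∃ u : Vars g, vi u = a ∧ vj u = b := by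
  obtain ⟨h1, h2, h3, h4, h5, h6⟩ := h
  exact ⟨⟨(⟨a.toNat, by omega⟩, ⟨b.toNat, by omega⟩), show a.toNat ≤ b.toNat + 2 by omega,
    show b.toNat ≤ 2 * g - 2 by omega, show (a.toNat + b.toNat) % 2 = 0 by omega,
    show ¬(a.toNat = 0 ∧ b.toNat = 0) by omega⟩,
    by simp [vi]; omega, by simp [vj]; omega⟩

theorem vars_ext {u v : Vars g} (hi : vi u = vi v) (hj : vj u = vj v) : u = v := by
  simp only [vi, vj, Nat.cast_inj] at hi hj
  exact Subtype.ext (Prod.ext (Fin.ext hi) (Fin.ext hj))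

theorem vi_eq_two_of_vj_eq_zero {u : Vars g} (h : vj u = 0) : vi u = 2 := by
  have := isVarIndex_vi_vj u
  unfold IsVarIndex at this
  omega

theorem xv_vi_vj (u : Vars g) : xv g (vi u) (vj u) = X (Sum.inl u) := by
  have h := isVarIndex_vi_vj u
  unfold IsVarIndex at h
  unfold xv
  rw [dif_pos h]
  congr

theorem xv_of_not_isVarIndex {a b : ℤ} (h : ¬IsVarIndex g a b) (h0 : ¬(a = 0 ∧ b = 0)) :
    xv g a b = 0 := by
  unfold IsVarIndex at h
  unfold xv
  rw [dif_neg h, if_neg h0]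

theorem xv_zero_zero : xv g 0 0 = C (g : ℚ) := by
  unfold xv
  rw [dif_neg (by simp), if_pos ⟨rfl, rfl⟩, C_eq_coe_nat]

def IsSignCoherent (P : A g) : Prop :=
  ∀ m : Idx g →₀ ℕ, m (Sum.inr ()) = 0 →
    0 ≤ signedCoeff m P ∧ ∀ z : Vars g, vj z = 0 → m (Sum.inl z) ≠ 0 → coeff m P = 0

theorem isSignCoherent_of_coeff_eq_zero {P : A g}
    (h : ∀ m : Idx g →₀ ℕ, m (Sum.inr ()) = 0 → coeff m P = 0) : IsSignCoherent P :=
  fun m hm => ⟨by simp [signedCoeff_apply, h m hm], fun _ _ _ => h m hm⟩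

theorem IsSignCoherent.add {P Q : A g} (hP : IsSignCoherent P) (hQ : IsSignCoherent Q) :
    IsSignCoherent (P + Q) := fun m hm =>
  ⟨by rw [map_add]; exact add_nonneg (hP m hm).1 (hQ m hm).1,
    fun z hz hmz => by rw [coeff_add, (hP m hm).2 z hz hmz, (hQ m hm).2 z hz hmz, add_zero]⟩

theorem IsSignCoherent.smul {P : A g} (hP : IsSignCoherent P) {c : ℚ} (hc : 0 ≤ c) :
    IsSignCoherent (c • P) := fun m hm =>
  ⟨by rw [map_smul, smul_eq_mul]; exact mul_nonneg hc (hP m hm).1,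
    fun z hz hmz => by rw [coeff_smul, (hP m hm).2 z hz hmz, smul_zero]⟩

theorem IsSignCoherent.sum {ι : Type*} (s : Finset ι) {P : ι → A g}
    (hP : ∀ k ∈ s, IsSignCoherent (P k)) : IsSignCoherent (∑ k ∈ s, P k) := fun m hm =>
  ⟨by rw [map_sum]; exact sum_nonneg fun k hk => (hP k hk m hm).1,
    fun z hz hmz => by rw [coeff_sum]; exact sum_eq_zero fun k hk => (hP k hk m hm).2 z hz hmz⟩

theorem coeff_Y_mul_eq_zero (Q : A g) {m : Idx g →₀ ℕ} (hm : m (Sum.inr ()) = 0) :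
    coeff m (Y g * Q) = 0 := by
  rw [Y, coeff_X_mul', if_neg (by simp [hm])]

theorem IsSignCoherent.neg_pderiv {P : A g} (hP : IsSignCoherent P) (v : Vars g) :
    IsSignCoherent (-pderiv (Sum.inl v) P) := by
  intro m hm
  have hm' : (m + Finsupp.single (Sum.inl v) 1 : Idx g →₀ ℕ) (Sum.inr ()) = 0 := by simp [hm]
  refine ⟨?_, fun z hz hmz => ?_⟩
  · rw [map_neg, signedCoeff_pderiv, neg_neg]
    exact mul_nonneg (hP _ hm').1 (by positivity)
  · rw [coeff_neg, coeff_pderiv, (hP _ hm').2 z hz (by simp [hmz]), zero_mul, neg_zero]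

theorem IsSignCoherent.coeff_pderiv_eq_zero {P : A g} (hP : IsSignCoherent P) {v : Vars g}
    (hv : vj v = 0) {m : Idx g →₀ ℕ} (hm : m (Sum.inr ()) = 0) :
    coeff m (pderiv (Sum.inl v) P) = 0 := by
  rw [coeff_pderiv, (hP _ (by simp [hm])).2 v hv (by simp), zero_mul]

theorem IsSignCoherent.neg_X_mul {P : A g} (hP : IsSignCoherent P) {u : Vars g} (hu : vj u ≠ 0) :
    IsSignCoherent (-(X (Sum.inl u) * P)) := by
  intro m hm
  by_cases hmu : m (Sum.inl u) = 0
  · refine ⟨?_, fun _ _ _ => ?_⟩ <;>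
      simp [signedCoeff_apply, coeff_X_mul', hmu]
  obtain ⟨μ, rfl⟩ : ∃ μ, m = μ + Finsupp.single (Sum.inl u) 1 :=
    ⟨m - Finsupp.single (Sum.inl u) 1,
      (tsub_add_cancel_of_le (by simpa [Nat.one_le_iff_ne_zero])).symm⟩
  have hμ : μ (Sum.inr ()) = 0 := by simpa using hm
  refine ⟨?_, fun z hz hmz => ?_⟩
  · rw [map_neg, signedCoeff_X_mul, neg_neg]
    exact (hP μ hμ).1
  · have hzu : z ≠ u := by rintro rfl; exact hu hz
    rw [coeff_neg, add_comm, coeff_X_mul, (hP μ hμ).2 z hz (by simpa [hzu] using hmz), neg_zero]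

noncomputable def mergeTerm (v w : Vars g) (P : A g) : A g :=
  (Y g * xv g (vi v - 1) (vj v - 1) * xv g (vi w - 1) (vj w - 1) -
      C (binom (vi v + vi w - 2) (vi v - 1)) * xv g (vi v + vi w - 2) (vj v + vj w)) *
    pderiv (Sum.inl v) (pderiv (Sum.inl w) P)

noncomputable def shiftTerm (v : Vars g) (P : A g) : A g :=
  xv g (vi v - 2) (vj v) * pderiv (Sum.inl v) P

theorem Fop_apply (P : A g) :
    Fop g P = (1 / 2 : ℚ) • ∑ v, ∑ w, mergeTerm v w P + ∑ v, shiftTerm v P := by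
  simp [Fop, mergeTerm, shiftTerm, LinearMap.sum_apply]

theorem isSignCoherent_mergeTerm {P : A g} (hP : IsSignCoherent P) (v w : Vars g) :
    IsSignCoherent (mergeTerm v w P) := by
  set R := -pderiv (Sum.inl w) P
  have hR : IsSignCoherent R := hP.neg_pderiv w
  set Q := -pderiv (Sum.inl v) R
  have hQ : IsSignCoherent Q := hR.neg_pderiv v
  have hsplit : mergeTerm v w P = Y g * (xv g (vi v - 1) (vj v - 1) *
      xv g (vi w - 1) (vj w - 1) * Q) +
      binom (vi v + vi w - 2) (vi v - 1) • -(xv g (vi v + vi w - 2) (vj v + vj w) * Q) := by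
    simp only [mergeTerm, Q, R, map_neg, neg_neg, ← C_mul']
    ring
  rw [hsplit]
  refine (isSignCoherent_of_coeff_eq_zero fun m hm => coeff_Y_mul_eq_zero _ hm).add
    (IsSignCoherent.smul ?_ (binom_nonneg (by linarith [isVarIndex_vi_vj w |>.1])))
  by_cases hidx : IsVarIndex g (vi v + vi w - 2) (vj v + vj w)
  · obtain ⟨u, hui, huj⟩ := exists_vi_vj_eq hidx
    rw [← hui, ← huj, xv_vi_vj]
    by_cases hu : vj u = 0
    -- then `v = w = x_{2,0}`, and `∂_{2,0}` kills every `y`-free coefficient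
    · have hv : vj v = 0 := by linarith [(isVarIndex_vi_vj v).2.1, (isVarIndex_vi_vj w).2.1]
      refine isSignCoherent_of_coeff_eq_zero fun m hm => ?_
      rw [coeff_neg, coeff_X_mul', neg_eq_zero]
      split_ifs
      · rw [coeff_neg, hR.coeff_pderiv_eq_zero hv (by simp [hm]), neg_zero]
      · rfl
    · exact hQ.neg_X_mul hu
  · have h00 : ¬(vi v + vi w - 2 = 0 ∧ vj v + vj w = 0) := by
      rintro ⟨hi, hj⟩
      have hv : vj v = 0 := by linarith [(isVarIndex_vi_vj v).2.1, (isVarIndex_vi_vj w).2.1]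
      have hw : vj w = 0 := by linarith
      linarith [vi_eq_two_of_vj_eq_zero hv, vi_eq_two_of_vj_eq_zero hw]
    rw [xv_of_not_isVarIndex hidx h00, zero_mul, neg_zero]
    exact isSignCoherent_of_coeff_eq_zero fun _ _ => coeff_zero _

theorem isSignCoherent_shiftTerm {P : A g} (hP : IsSignCoherent P) (v : Vars g) :
    IsSignCoherent (shiftTerm v P) := by
  by_cases hidx : IsVarIndex g (vi v - 2) (vj v)
  · obtain ⟨u, hui, huj⟩ := exists_vi_vj_eq hidx
    have hu : vj u ≠ 0 := fun hu => by
      linarith [vi_eq_two_of_vj_eq_zero hu, vi_eq_two_of_vj_eq_zero (huj ▸ hu : vj v = 0)]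
    rw [shiftTerm, ← hui, ← huj, xv_vi_vj, ← neg_neg (X _ * _), ← mul_neg]
    exact (hP.neg_pderiv v).neg_X_mul hu
  · by_cases h00 : vi v - 2 = 0 ∧ vj v = 0
    · refine isSignCoherent_of_coeff_eq_zero fun m hm => ?_
      rw [shiftTerm, h00.1, h00.2, xv_zero_zero, coeff_C_mul,
        hP.coeff_pderiv_eq_zero h00.2 hm, mul_zero]
    · rw [shiftTerm, xv_of_not_isVarIndex hidx h00, zero_mul]
      exact isSignCoherent_of_coeff_eq_zero fun _ _ => coeff_zero _

theorem isSignCoherent_Fop {P : A g} (hP : IsSignCoherent P) : IsSignCoherent (Fop g P) := by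
  rw [Fop_apply]
  exact (IsSignCoherent.sum _ fun v _ => IsSignCoherent.sum _ fun w _ =>
    isSignCoherent_mergeTerm hP v w).smul (by norm_num) |>.add
      (IsSignCoherent.sum _ fun v _ => isSignCoherent_shiftTerm hP v)

theorem isSignCoherent_pow_Fop {P : A g} (hP : IsSignCoherent P) (t : ℕ) :
    IsSignCoherent ((Fop g ^ t) P) := by
  induction t with
  | zero => exact hP
  | succ t ih => rw [pow_succ', Module.End.mul_apply]; exact isSignCoherent_Fop ih

theorem isSignCoherent_X_pow {u : Vars g} (hu : vj u ≠ 0) {n : ℕ} (hn : Even n) :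
    IsSignCoherent (X (Sum.inl u) ^ n) := by
  intro m _
  rw [X_pow_eq_monomial, signedCoeff_apply, coeff_monomial]
  split_ifs with h
  · subst h
    refine ⟨by simp [hn.neg_one_pow], fun z hz hmz => (hu ?_).elim⟩
    obtain rfl : u = z := by_contra fun hne => by simp [hne] at hmz
    exact hz
  · simp

theorem signedCoeff_mergeTerm_le {P : A g} (hP : IsSignCoherent P) {m : Idx g →₀ ℕ}
    (hm : m (Sum.inr ()) = 0) (v w : Vars g) :
    signedCoeff m (mergeTerm v w P) / 2 ≤ signedCoeff m (Fop g P) := by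
  have hmerge v w : 0 ≤ signedCoeff m (mergeTerm v w P) :=
    (isSignCoherent_mergeTerm hP v w m hm).1
  have hshift : 0 ≤ ∑ v, signedCoeff m (shiftTerm v P) :=
    sum_nonneg fun v _ => (isSignCoherent_shiftTerm hP v m hm).1
  have hvw : signedCoeff m (mergeTerm v w P) ≤ ∑ v, ∑ w, signedCoeff m (mergeTerm v w P) :=
    (single_le_sum (fun w _ => hmerge v w) (mem_univ w)).trans
      (single_le_sum (fun v _ => sum_nonneg fun w _ => hmerge v w) (mem_univ v))
  rw [Fop_apply, map_add, map_smul, map_sum, smul_eq_mul]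
  simp only [map_sum]
  linarith

theorem signedCoeff_shiftTerm_le {P : A g} (hP : IsSignCoherent P) {m : Idx g →₀ ℕ}
    (hm : m (Sum.inr ()) = 0) (v : Vars g) :
    signedCoeff m (shiftTerm v P) ≤ signedCoeff m (Fop g P) := by
  have hmerge : 0 ≤ ∑ v, ∑ w, signedCoeff m (mergeTerm v w P) :=
    sum_nonneg fun v _ => sum_nonneg fun w _ => (isSignCoherent_mergeTerm hP v w m hm).1
  have hv : signedCoeff m (shiftTerm v P) ≤ ∑ v, signedCoeff m (shiftTerm v P) :=
    single_le_sum (fun v _ => (isSignCoherent_shiftTerm hP v m hm).1) (mem_univ v)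
  rw [Fop_apply, map_add, map_smul, map_sum, smul_eq_mul]
  simp only [map_sum]
  linarith

theorem signedCoeff_Fop_pos_of_merge {P : A g} (hP : IsSignCoherent P) {v w u : Vars g}
    (hv : 1 ≤ vi v) (hw : 1 ≤ vi w) (hui : vi u = vi v + vi w - 2) (huj : vj u = vj v + vj w)
    {μ : Idx g →₀ ℕ} (hμ : μ (Sum.inr ()) = 0)
    (h : 0 < signedCoeff (μ + Finsupp.single (Sum.inl v) 1 + Finsupp.single (Sum.inl w) 1) P) :
    0 < signedCoeff (μ + Finsupp.single (Sum.inl u) 1) (Fop g P) := by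
  have hm : (μ + Finsupp.single (Sum.inl u) 1 : Idx g →₀ ℕ) (Sum.inr ()) = 0 := by simp [hμ]
  refine lt_of_lt_of_le ?_ (signedCoeff_mergeTerm_le hP hm v w)
  have hY : signedCoeff (μ + Finsupp.single (Sum.inl u) 1) (Y g * xv g (vi v - 1) (vj v - 1) *
      xv g (vi w - 1) (vj w - 1) * pderiv (Sum.inl v) (pderiv (Sum.inl w) P)) = 0 := by
    rw [signedCoeff_apply, mul_assoc, mul_assoc, coeff_Y_mul_eq_zero _ hm, mul_zero]
  rw [mergeTerm, ← hui, ← huj, xv_vi_vj, sub_mul, map_sub, hY, mul_assoc, C_mul', map_smul,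
    signedCoeff_X_mul, signedCoeff_pderiv, signedCoeff_pderiv, smul_eq_mul]
  have hc : 0 < binom (vi u) (vi v - 1) := binom_pos (by omega) (by omega)
  have hw1 : (0 : ℚ) < ((μ + Finsupp.single (Sum.inl v) 1 : Idx g →₀ ℕ) (Sum.inl w) : ℚ) + 1 := by
    positivity
  have hv1 : (0 : ℚ) < (μ (Sum.inl v) : ℚ) + 1 := by positivity
  have := mul_pos hc (mul_pos (mul_pos h hw1) hv1)
  linarith

theorem signedCoeff_Fop_pos_of_shift {P : A g} (hP : IsSignCoherent P) {v u : Vars g}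
    (hui : vi u = vi v - 2) (huj : vj u = vj v) {μ : Idx g →₀ ℕ} (hμ : μ (Sum.inr ()) = 0)
    (h : 0 < signedCoeff (μ + Finsupp.single (Sum.inl v) 1) P) :
    0 < signedCoeff (μ + Finsupp.single (Sum.inl u) 1) (Fop g P) := by
  have hm : (μ + Finsupp.single (Sum.inl u) 1 : Idx g →₀ ℕ) (Sum.inr ()) = 0 := by simp [hμ]
  refine lt_of_lt_of_le ?_ (signedCoeff_shiftTerm_le hP hm v)
  rw [shiftTerm, ← hui, ← huj, xv_vi_vj, signedCoeff_X_mul, signedCoeff_pderiv, neg_neg]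
  exact mul_pos h (by positivity)

theorem signedCoeff_pow_Fop_pos_of_merges {w : Vars g} (hwi : vi w = 3) (hwj : vj w = 1) :
    ∀ (k : ℕ) {Q : A g}, IsSignCoherent Q → ∀ {v u : Vars g}, 1 ≤ vi v →
      vi u = vi v + k → vj u = vj v + k →
      0 < signedCoeff (Finsupp.single (Sum.inl w) k + Finsupp.single (Sum.inl v) 1) Q →
      0 < signedCoeff (Finsupp.single (Sum.inl u) 1) ((Fop g ^ k) Q)
  | 0, Q, _, v, u, _, hui, huj, h => by
    obtain rfl : u = v := vars_ext (by simpa using hui) (by simpa using huj)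
    simpa using h
  | k + 1, Q, hQ, v, u, hv, hui, huj, h => by
    have hu_idx := isVarIndex_vi_vj u
    have hv_idx := isVarIndex_vi_vj v
    unfold IsVarIndex at hu_idx hv_idx
    obtain ⟨v', hv'i, hv'j⟩ := exists_vi_vj_eq (g := g) (a := vi v + 1) (b := vj v + 1)
      (by unfold IsVarIndex; omega)
    rw [Finsupp.single_add, add_right_comm] at h
    have hstep := signedCoeff_Fop_pos_of_merge hQ hv (by omega) (u := v') (by omega) (by omega)
      (by simp) h
    rw [pow_succ, Module.End.mul_apply]
    exact signedCoeff_pow_Fop_pos_of_merges hwi hwj k (isSignCoherent_Fop hQ) (by omega)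
      (by omega) (by omega) hstep

theorem signedCoeff_pow_Fop_pos_of_shifts :
    ∀ (s : ℕ) {Q : A g}, IsSignCoherent Q → ∀ {v u : Vars g},
      vi v = vi u + 2 * s → vj v = vj u →
      0 < signedCoeff (Finsupp.single (Sum.inl v) 1) Q →
      0 < signedCoeff (Finsupp.single (Sum.inl u) 1) ((Fop g ^ s) Q)
  | 0, Q, _, v, u, hvi, hvj, h => by
    rw [← vars_ext (by simpa using hvi) hvj]
    simpa using h
  | s + 1, Q, hQ, v, u, hvi, hvj, h => by
    have hu_idx := isVarIndex_vi_vj u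
    have hv_idx := isVarIndex_vi_vj v
    unfold IsVarIndex at hu_idx hv_idx
    obtain ⟨v', hv'i, hv'j⟩ := exists_vi_vj_eq (g := g) (a := vi u + 2 * s) (b := vj u)
      (by unfold IsVarIndex; omega)
    rw [← zero_add (Finsupp.single _ _)] at h
    have hstep := signedCoeff_Fop_pos_of_shift hQ (u := v') (by omega) (by omega) (by simp) h
    rw [zero_add] at hstep
    rw [pow_succ, Module.End.mul_apply]
    exact signedCoeff_pow_Fop_pos_of_shifts s (isSignCoherent_Fop hQ) hv'i hv'j hstep

end

/-- In `F^{3i}(x_{3,1}^{2i}) ∈ A_{(0,2i)}`, written as a polynomial in the variables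
`x_{0,2j}` and `y`, the coefficient of `x_{0,2i}` is strictly negative. -/
theorem coeff_x02i_neg (g i : ℕ) (hg : 2 ≤ g) (hi1 : 1 ≤ i) (hi2 : i ≤ g - 1) :
    MvPolynomial.coeff
        (Finsupp.single
          (Sum.inl (⟨(⟨0, by omega⟩, ⟨2 * i, by omega⟩),
            show (0 : ℕ) ≤ 2 * i + 2 by omega,
            show 2 * i ≤ 2 * g - 2 by omega,
            show (0 + 2 * i) % 2 = 0 by omega,
            show ¬((0 : ℕ) = 0 ∧ 2 * i = 0) by omega⟩ : Vars g) : Idx g) 1)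
        ((Fop g ^ (3 * i)) (xv g 3 1 ^ (2 * i))) < 0 := by
  obtain ⟨w, hwi, hwj⟩ := exists_vi_vj_eq (g := g) (a := 3) (b := 1)
    (by unfold IsVarIndex; omega)
  obtain ⟨v, hvi, hvj⟩ := exists_vi_vj_eq (g := g) (a := 2 * i + 2) (b := 2 * i)
    (by unfold IsVarIndex; omega)
  have hx : xv g 3 1 ^ (2 * i) = X (Sum.inl w) ^ (2 * i) := by rw [← hwi, ← hwj, xv_vi_vj]
  have hP : IsSignCoherent (X (Sum.inl w) ^ (2 * i)) :=
    isSignCoherent_X_pow (by omega) (even_two_mul i)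
  have hstart : 0 < signedCoeff (Finsupp.single (Sum.inl w) (2 * i - 1) +
      Finsupp.single (Sum.inl w) 1) (X (Sum.inl w) ^ (2 * i) : A g) := by
    rw [← Finsupp.single_add, Nat.sub_add_cancel (by omega), X_pow_eq_monomial,
      signedCoeff_apply, coeff_monomial, if_pos rfl, Finsupp.degree_single,
      (even_two_mul i).neg_one_pow]
    norm_num
  have hmid := signedCoeff_pow_Fop_pos_of_merges hwi hwj (2 * i - 1) hP (v := w) (u := v)
    (by omega) (by omega) (by omega) hstart
  suffices key : ∀ u : Vars g, vi u = 0 → vj u = 2 * i →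
      coeff (Finsupp.single (Sum.inl u) 1) ((Fop g ^ (3 * i)) (xv g 3 1 ^ (2 * i))) < 0 from
    key _ rfl (by simp [vj])
  intro u hui huj
  have h := signedCoeff_pow_Fop_pos_of_shifts (i + 1) (isSignCoherent_pow_Fop hP _) (u := u)
    (by omega) (by omega) hmid
  rw [← Module.End.mul_apply, ← pow_add, show i + 1 + (2 * i - 1) = 3 * i by omega,
    signedCoeff_apply, Finsupp.degree_single, pow_one, ← hx] at h
  linarith
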